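/- Let R(A,B,C) be a recollement of module categories such that in addition i^*(j_*(Y)) ≅ 0 and i^!(j_*(Y)) ≅ 0 for every Y in mod C. If 𝒮_L is a semibrick in mod A and 𝒮_R is a semibrick in mod C, then the union i_*(𝒮_L) ∪ j_*(𝒮_R) = {i_*(S) : S ∈ 𝒮_L} ∪ {j_*(S) : S ∈ 𝒮_R} is a semibrick in mod B. -/

import Mathlib

/-!
The fully faithful additive functors `i_*` and `j_*` carry semibricks to semibricks, so it
remains to kill the morphisms between the two halves. By adjunction,
`Hom(i_* X, j_* Y) ≅ Hom(j^* i_* X, Y) = 0` because `i_*` lands in the kernel of `j^*`, and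
`Hom(j_* Y, i_* X) ≅ Hom(i^* j_* Y, X) = 0` because `i^* j_* = 0`.
-/

open CategoryTheory CategoryTheory.Limits

universe v u₁ u₂ u₃

/-- A module `S` is a *brick* if its endomorphism ring is a division ring, i.e.
it is nontrivial (`𝟙 S ≠ 0`) and every nonzero endomorphism is invertible. -/
def IsBrick {R : Type u₁} [Ring R] (S : ModuleCat.{v} R) : Prop :=
  𝟙 S ≠ 0 ∧ ∀ f : S ⟶ S, f ≠ 0 → IsIso f

/-- A set of modules is a *semibrick* if every member is a brick and there is no nonzero
homomorphism between non-isomorphic members. -/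
def IsSemibrick {R : Type u₁} [Ring R] (𝒮 : Set (ModuleCat.{v} R)) : Prop :=
  (∀ S ∈ 𝒮, IsBrick S) ∧
    ∀ S₁ ∈ 𝒮, ∀ S₂ ∈ 𝒮, ¬ Nonempty (S₁ ≅ S₂) → ∀ f : S₁ ⟶ S₂, f = 0

/-- A recollement of `mod B` relative to `mod A` and `mod C`: six additive functors
with the four adjunctions, the three full embeddings, and the condition that the
essential image of `i_*` is the kernel of `j^*`. -/
structure ModuleRecollement (A : Type u₁) (B : Type u₂) (C : Type u₃)
    [Ring A] [Ring B] [Ring C] where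
  /-- `i^* : mod B → mod A` -/
  iUpperStar : ModuleCat.{v} B ⥤ ModuleCat.{v} A
  /-- `i_* : mod A → mod B` -/
  iStar : ModuleCat.{v} A ⥤ ModuleCat.{v} B
  /-- `i^! : mod B → mod A` -/
  iShriek : ModuleCat.{v} B ⥤ ModuleCat.{v} A
  /-- `j_! : mod C → mod B` -/
  jLowerShriek : ModuleCat.{v} C ⥤ ModuleCat.{v} B
  /-- `j^* : mod B → mod C` -/
  jUpperStar : ModuleCat.{v} B ⥤ ModuleCat.{v} C
  /-- `j_* : mod C → mod B` -/
  jStar : ModuleCat.{v} C ⥤ ModuleCat.{v} B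
  iUpperStar_additive : iUpperStar.Additive
  iStar_additive : iStar.Additive
  iShriek_additive : iShriek.Additive
  jLowerShriek_additive : jLowerShriek.Additive
  jUpperStar_additive : jUpperStar.Additive
  jStar_additive : jStar.Additive
  /-- `(i^*, i_*)` is an adjoint pair -/
  adj₁ : iUpperStar ⊣ iStar
  /-- `(i_*, i^!)` is an adjoint pair -/
  adj₂ : iStar ⊣ iShriek
  /-- `(j_!, j^*)` is an adjoint pair -/
  adj₃ : jLowerShriek ⊣ jUpperStar
  /-- `(j^*, j_*)` is an adjoint pair -/
  adj₄ : jUpperStar ⊣ jStar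
  iStar_full : iStar.Full
  iStar_faithful : iStar.Faithful
  jLowerShriek_full : jLowerShriek.Full
  jLowerShriek_faithful : jLowerShriek.Faithful
  jStar_full : jStar.Full
  jStar_faithful : jStar.Faithful
  /-- the essential image of `i_*` equals the kernel of `j^*` -/
  essImage_eq_ker : ∀ X : ModuleCat.{v} B,
    (∃ Y : ModuleCat.{v} A, Nonempty (iStar.obj Y ≅ X)) ↔ IsZero (jUpperStar.obj X)


section Bricks

variable {R₁ : Type u₁} {R₂ : Type u₂} [Ring R₁] [Ring R₂]
  (F : ModuleCat.{v} R₁ ⥤ ModuleCat.{v} R₂) [F.Full] [F.Faithful] [F.Additive]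

theorem IsBrick.map {S : ModuleCat.{v} R₁} (hS : IsBrick S) : IsBrick (F.obj S) := by
  refine ⟨fun h ↦ hS.1 (F.map_injective (by rw [F.map_id, F.map_zero, h])), fun f hf ↦ ?_⟩
  obtain ⟨g, rfl⟩ := F.map_surjective f
  have : IsIso g := hS.2 g (by rintro rfl; exact hf (F.map_zero _ _))
  infer_instance

theorem IsSemibrick.image {𝒮 : Set (ModuleCat.{v} R₁)} (h𝒮 : IsSemibrick 𝒮) :
    IsSemibrick (F.obj '' 𝒮) := by
  refine ⟨?_, ?_⟩
  · rintro _ ⟨S, hS, rfl⟩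
    exact (h𝒮.1 S hS).map F
  · rintro _ ⟨S₁, hS₁, rfl⟩ _ ⟨S₂, hS₂, rfl⟩ hniso f
    obtain ⟨g, rfl⟩ := F.map_surjective f
    rw [h𝒮.2 S₁ hS₁ S₂ hS₂ (fun ⟨e⟩ ↦ hniso ⟨F.mapIso e⟩) g, F.map_zero]

end Bricks

theorem IsSemibrick.union {R : Type u₁} [Ring R] {𝒮₁ 𝒮₂ : Set (ModuleCat.{v} R)}
    (h₁ : IsSemibrick 𝒮₁) (h₂ : IsSemibrick 𝒮₂)
    (h₁₂ : ∀ S₁ ∈ 𝒮₁, ∀ S₂ ∈ 𝒮₂, ∀ f : S₁ ⟶ S₂, f = 0)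
    (h₂₁ : ∀ S₂ ∈ 𝒮₂, ∀ S₁ ∈ 𝒮₁, ∀ f : S₂ ⟶ S₁, f = 0) :
    IsSemibrick (𝒮₁ ∪ 𝒮₂) := by
  refine ⟨fun S hS ↦ hS.elim (h₁.1 S) (h₂.1 S), ?_⟩
  intro S hS T hT hniso f
  rcases hS with hS | hS <;> rcases hT with hT | hT
  · exact h₁.2 S hS T hT hniso f
  · exact h₁₂ S hS T hT f
  · exact h₂₁ S hS T hT f
  · exact h₂.2 S hS T hT hniso f

theorem CategoryTheory.Adjunction.eq_zero_of_isZero_left_obj {𝒞 𝒟 : Type*} [Category 𝒞]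
    [Category 𝒟] [HasZeroMorphisms 𝒞] [HasZeroMorphisms 𝒟] {L : 𝒞 ⥤ 𝒟} {G : 𝒟 ⥤ 𝒞}
    [G.PreservesZeroMorphisms] (adj : L ⊣ G) {X : 𝒞} {Y : 𝒟} (hX : IsZero (L.obj X))
    (f : X ⟶ G.obj Y) : f = 0 := by
  calc f = adj.homEquiv X Y 0 := (adj.eq_homEquiv_apply 0 f).2 (hX.eq_of_src _ _)
    _ = 0 := by rw [adj.homEquiv_unit, G.map_zero, comp_zero]

namespace ModuleRecollement

variable {A : Type u₁} {B : Type u₂} {C : Type u₃} [Ring A] [Ring B] [Ring C]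
  (R : ModuleRecollement.{v} A B C)

theorem iStar_jStar_hom_eq_zero (X : ModuleCat.{v} A) (Y : ModuleCat.{v} C)
    (f : R.iStar.obj X ⟶ R.jStar.obj Y) : f = 0 :=
  have := R.jStar_additive
  R.adj₄.eq_zero_of_isZero_left_obj ((R.essImage_eq_ker _).mp ⟨X, ⟨Iso.refl _⟩⟩) f

theorem jStar_iStar_hom_eq_zero
    (h : ∀ Y : ModuleCat.{v} C, IsZero (R.iUpperStar.obj (R.jStar.obj Y)))
    (Y : ModuleCat.{v} C) (X : ModuleCat.{v} A) (f : R.jStar.obj Y ⟶ R.iStar.obj X) : f = 0 :=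
  have := R.iStar_additive
  R.adj₁.eq_zero_of_isZero_left_obj (h Y) f

end ModuleRecollement

theorem glued_semibrick_jStar_general {A : Type u₁} {B : Type u₂} {C : Type u₃}
    [Ring A] [Ring B] [Ring C] (R : ModuleRecollement.{v} A B C)
    (h₁ : ∀ Y : ModuleCat.{v} C, IsZero (R.iUpperStar.obj (R.jStar.obj Y)))
    (𝒮L : Set (ModuleCat.{v} A)) (𝒮R : Set (ModuleCat.{v} C))
    (hL : IsSemibrick 𝒮L) (hR : IsSemibrick 𝒮R) :
    IsSemibrick (R.iStar.obj '' 𝒮L ∪ R.jStar.obj '' 𝒮R) := by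
  have := R.iStar_additive
  have := R.iStar_full
  have := R.iStar_faithful
  have := R.jStar_additive
  have := R.jStar_full
  have := R.jStar_faithful
  refine (hL.image R.iStar).union (hR.image R.jStar) ?_ ?_
  · rintro _ ⟨X, -, rfl⟩ _ ⟨Y, -, rfl⟩
    exact R.iStar_jStar_hom_eq_zero X Y
  · rintro _ ⟨Y, -, rfl⟩ _ ⟨X, -, rfl⟩
    exact R.jStar_iStar_hom_eq_zero h₁ Y X

/-- In a recollement with `i^* j_* = 0` and `i^! j_* = 0`, the union of the image of a
semibrick of `mod A` under `i_*` with the image of a semibrick of `mod C` under `j_*` is a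
semibrick of `mod B`. -/
theorem glued_semibrick_jStar {A : Type u₁} {B : Type u₂} {C : Type u₃}
    [Ring A] [Ring B] [Ring C] (R : ModuleRecollement.{v} A B C)
    (h₁ : ∀ Y : ModuleCat.{v} C, IsZero (R.iUpperStar.obj (R.jStar.obj Y)))
    (h₂ : ∀ Y : ModuleCat.{v} C, IsZero (R.iShriek.obj (R.jStar.obj Y)))
    (𝒮L : Set (ModuleCat.{v} A)) (𝒮R : Set (ModuleCat.{v} C))
    (hL : IsSemibrick 𝒮L) (hR : IsSemibrick 𝒮R) :
    IsSemibrick (R.iStar.obj '' 𝒮L ∪ R.jStar.obj '' 𝒮R) :=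
  glued_semibrick_jStar_general R h₁ 𝒮L 𝒮R hL hR
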